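/- Let 0 < p < 1, let α_1,…,α_N be positive real numbers, let u_1,…,u_N (N ≥ n+1) be unit vectors in ℝ^n not concentrated on a closed hemisphere, and let P ∈ P(u_1,…,u_N) be a polytope such that the origin o lies in the interior of P and o is the point of P maximizing Φ_P(ξ) = Σ_{k=1}^N α_k (h(P,u_k) − ξ·u_k)^p over ξ ∈ P. Then Σ_{k=1}^N α_k h(P,u_k)^{p−1} u_k = 0. -/

import Mathlib

/-! Since `o` is interior to the compact set `P`, every `h(P,u_k)` is positive, so each summand
`α_k (h(P,u_k) - ξ·u_k)^p` is differentiable at `ξ = o`, and `Φ_P` has derivative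
`ξ ↦ -p ⟪∑ α_k h(P,u_k)^(p-1) u_k, ξ⟫` there. An interior maximizer is a critical point; as
`p ≠ 0` and `x ↦ ⟪x, ·⟫` is injective, the vector sum vanishes. -/

open MeasureTheory Set
open scoped RealInnerProductSpace

noncomputable section

/-- A polytope: convex hull of finitely many points with positive volume. -/
def IsPolytope {n : ℕ} (P : Set (EuclideanSpace ℝ (Fin n))) : Prop :=
  ∃ S : Finset (EuclideanSpace ℝ (Fin n)),
    P = convexHull ℝ (S : Set (EuclideanSpace ℝ (Fin n))) ∧ 0 < volume P

/-- Support function of a set. -/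
def suppF {n : ℕ} (P : Set (EuclideanSpace ℝ (Fin n))) (u : EuclideanSpace ℝ (Fin n)) : ℝ :=
  sSup ((fun x => ⟪x, u⟫) '' P)

/-- Support set F(P,u). -/
def suppSet {n : ℕ} (P : Set (EuclideanSpace ℝ (Fin n))) (u : EuclideanSpace ℝ (Fin n)) :
    Set (EuclideanSpace ℝ (Fin n)) :=
  {x ∈ P | ⟪x, u⟫ = suppF P u}

/-- (n-1)-dimensional Hausdorff measure of the support set F(P,u), as a real number. -/
def facetArea {n : ℕ} (P : Set (EuclideanSpace ℝ (Fin n))) (u : EuclideanSpace ℝ (Fin n)) : ℝ :=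
  (MeasureTheory.Measure.hausdorffMeasure ((n : ℝ) - 1) (suppSet P u)).toReal

/-- The unit vectors u 1, ..., u N are not concentrated on a closed hemisphere. -/
def NotOnClosedHemisphere {n N : ℕ} (u : Fin N → EuclideanSpace ℝ (Fin n)) : Prop :=
  ¬ ∃ v : EuclideanSpace ℝ (Fin n), ‖v‖ = 1 ∧ ∀ i, 0 ≤ ⟪u i, v⟫

/-- Membership in the class P(u₁,...,u_N). -/
def InPolyClass {n N : ℕ} (u : Fin N → EuclideanSpace ℝ (Fin n))
    (P : Set (EuclideanSpace ℝ (Fin n))) : Prop :=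
  IsPolytope P ∧ P = ⋂ k, {x | ⟪x, u k⟫ ≤ suppF P (u k)}

/-- The functional Φ_P(ξ) = Σ α_k (h(P,u_k) - ξ·u_k)^p. -/
def Phi {n N : ℕ} (α : Fin N → ℝ) (u : Fin N → EuclideanSpace ℝ (Fin n)) (p : ℝ)
    (P : Set (EuclideanSpace ℝ (Fin n))) (ξ : EuclideanSpace ℝ (Fin n)) : ℝ :=
  ∑ k, α k * (suppF P (u k) - ⟪ξ, u k⟫) ^ p

theorem IsPolytope.isCompact {n : ℕ} {P : Set (EuclideanSpace ℝ (Fin n))} (hP : IsPolytope P) :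
    IsCompact P := by
  obtain ⟨S, rfl, -⟩ := hP
  exact S.finite_toSet.isCompact_convexHull (𝕜 := ℝ)

theorem suppF_pos_of_zero_mem_interior {n : ℕ} {P : Set (EuclideanSpace ℝ (Fin n))}
    (hc : IsCompact P) (ho : (0 : EuclideanSpace ℝ (Fin n)) ∈ interior P)
    {u : EuclideanSpace ℝ (Fin n)} (hu : u ≠ 0) : 0 < suppF P u := by
  obtain ⟨ε, hε, hball⟩ := Metric.mem_nhds_iff.1 (mem_interior_iff_mem_nhds.1 ho)
  have hu' : 0 < ‖u‖ := norm_pos_iff.2 hu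
  set t := ε / (2 * ‖u‖)
  have ht : 0 < t := by positivity
  have htu : t • u ∈ P := hball <| by
    rw [mem_ball_zero_iff, norm_smul, Real.norm_of_nonneg ht.le]
    calc t * ‖u‖ = ε / 2 := by simp only [t]; field_simp
      _ < ε := half_lt_self hε
  have hbdd : BddAbove ((fun x => ⟪x, u⟫) '' P) :=
    (hc.image (continuous_id.inner continuous_const)).bddAbove
  calc 0 < ⟪t • u, u⟫ := by
        rw [real_inner_smul_left, real_inner_self_eq_norm_sq]; positivity
    _ ≤ suppF P u := le_csSup hbdd (mem_image_of_mem _ htu)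

theorem hasFDerivAt_rpow_sub_inner_zero {E : Type*} [NormedAddCommGroup E]
    [InnerProductSpace ℝ E] {c : ℝ} (hc : 0 < c) (p : ℝ) (v : E) :
    HasFDerivAt (fun ξ : E => (c - ⟪ξ, v⟫) ^ p) (-(p * c ^ (p - 1)) • innerSL ℝ v) 0 := by
  have hlin : HasFDerivAt (fun ξ : E => c - ⟪ξ, v⟫) (-innerSL ℝ v) 0 := by
    simpa [real_inner_comm] using ((innerSL ℝ v).hasFDerivAt (x := (0 : E))).const_sub c
  have hpow : HasDerivAt (fun x : ℝ => x ^ p) (p * c ^ (p - 1)) (c - ⟪(0 : E), v⟫) := by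
    simpa using Real.hasDerivAt_rpow_const (p := p) (Or.inl hc.ne')
  exact (hpow.comp_hasFDerivAt (0 : E) hlin).congr_fderiv
    ((smul_neg _ _).trans (neg_smul _ _).symm)

theorem hasFDerivAt_Phi_zero {n N : ℕ} (α : Fin N → ℝ) (u : Fin N → EuclideanSpace ℝ (Fin n))
    (p : ℝ) {P : Set (EuclideanSpace ℝ (Fin n))} (hpos : ∀ k, 0 < suppF P (u k)) :
    HasFDerivAt (Phi α u p P)
      (-(p • innerSL ℝ (∑ k, (α k * suppF P (u k) ^ (p - 1)) • u k))) 0 := by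
  refine (HasFDerivAt.fun_sum fun k _ =>
    (hasFDerivAt_rpow_sub_inner_zero (hpos k) p (u k)).const_mul (α k)).congr_fderiv ?_
  rw [map_sum, Finset.smul_sum, ← Finset.sum_neg_distrib]
  refine Finset.sum_congr rfl fun k _ => ?_
  rw [map_smul]
  module

theorem first_order_condition_at_origin_general
    {n N : ℕ}
    (p : ℝ) (hp0 : 0 < p)
    (α : Fin N → ℝ)
    (u : Fin N → EuclideanSpace ℝ (Fin n)) (hu : ∀ k, ‖u k‖ = 1)
    (P : Set (EuclideanSpace ℝ (Fin n))) (hP : InPolyClass u P)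
    (ho : (0 : EuclideanSpace ℝ (Fin n)) ∈ interior P)
    (hmax : IsMaxOn (Phi α u p P) P 0) :
    ∑ k, (α k * (suppF P (u k)) ^ (p - 1)) • u k = 0 := by
  have hpos (k : Fin N) : 0 < suppF P (u k) :=
    suppF_pos_of_zero_mem_interior hP.1.isCompact ho (norm_ne_zero_iff.mp (by simp [hu k]))
  have hcrit := (hmax.isLocalMax (mem_interior_iff_mem_nhds.mp ho)).hasFDerivAt_eq_zero
    (hasFDerivAt_Phi_zero α u p hpos)
  rwa [neg_eq_zero, smul_eq_zero, or_iff_right hp0.ne', ← map_zero (innerSL ℝ), innerSL_inj]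
    at hcrit

/-- First-order condition at an interior maximizer of Φ_P located at the origin:
Σ α_k h(P,u_k)^{p-1} u_k = 0 (Equation (4.4)). -/
theorem first_order_condition_at_origin
    {n N : ℕ} (hn : 2 ≤ n) (hN : n + 1 ≤ N)
    (p : ℝ) (hp0 : 0 < p) (hp1 : p < 1)
    (α : Fin N → ℝ) (hα : ∀ k, 0 < α k)
    (u : Fin N → EuclideanSpace ℝ (Fin n)) (hu : ∀ k, ‖u k‖ = 1)
    (hhem : NotOnClosedHemisphere u)
    (P : Set (EuclideanSpace ℝ (Fin n))) (hP : InPolyClass u P)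
    (ho : (0 : EuclideanSpace ℝ (Fin n)) ∈ interior P)
    (hmax : IsMaxOn (Phi α u p P) P 0) :
    ∑ k, (α k * (suppF P (u k)) ^ (p - 1)) • u k = 0 :=
  first_order_condition_at_origin_general p hp0 α u hu P hP ho hmax
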